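/- Let M be a compact complex manifold, r₁, r₂ ∈ S_M. Then r₁ + r₂ ∈ S_M, where S_M = {r ∈ ℕ, r ≥ 3 | Bs|rK_M| = ∅ and for generic x ∈ M, Bs|V(r,x)| = {x}}, with V(r,x) = {η ∈ H⁰(M, rK_M) | mult_x η ≥ 2nr/(r−2)} and n = dim M. -/

import Mathlib

/-!
If `η₁` vanishes to order `≥ 2nr₁/(r₁-2)` at `x`, then `η₁ ⊗ η₂` vanishes to order
`≥ 2n(r₁+r₂)/(r₁+r₂-2)` there, because this threshold decreases in `r`. Hence for `y ≠ x`,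
sections `ηᵢ ∈ V(rᵢ,x)` not vanishing at `y` multiply to a section of `V(r₁+r₂,x)` not vanishing
at `y`; the same multiplication with no vanishing condition shows `|(r₁+r₂)K_M|` is base point
free. Finally `x` lies in the base locus of `V(r,x)` since `2nr/(r-2) > 0`.
-/

/-- `m ≥ 2nr/(r-2)`, with the denominator cleared. -/
def IsLargeMult (n r : ℕ) (m : ℕ∞) : Prop :=
  ((2 * n * r : ℕ) : ℕ∞) ≤ ((r - 2 : ℕ) : ℕ∞) * m

namespace IsLargeMult

variable {n r : ℕ} {m : ℕ∞}

lemma two_mul_le (h : IsLargeMult n r m) (hr : 3 ≤ r) : ((2 * n : ℕ) : ℕ∞) ≤ m := by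
  have hr₂ : ((r - 2 : ℕ) : ℕ∞) ≠ 0 := by exact_mod_cast (by omega : r - 2 ≠ 0)
  rw [← ENat.mul_le_mul_left_iff hr₂ (ENat.natCast_ne_top _)]
  calc ((r - 2 : ℕ) : ℕ∞) * ((2 * n : ℕ) : ℕ∞) = ((2 * n * (r - 2) : ℕ) : ℕ∞) := by
        push_cast [mul_comm]; rfl
    _ ≤ ((2 * n * r : ℕ) : ℕ∞) := by gcongr; omega
    _ ≤ _ := h

lemma add (h : IsLargeMult n r m) (hr : 3 ≤ r) (s : ℕ) (k : ℕ∞) :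
    IsLargeMult n (r + s) (m + k) := by
  have hsub : r + s - 2 = (r - 2) + s := by omega
  calc ((2 * n * (r + s) : ℕ) : ℕ∞) = ((2 * n * r : ℕ) : ℕ∞) + s * ((2 * n : ℕ) : ℕ∞) := by
        push_cast; ring
    _ ≤ ((r - 2 : ℕ) : ℕ∞) * m + s * m := add_le_add h (mul_le_mul_right (h.two_mul_le hr) _)
    _ = ((r + s - 2 : ℕ) : ℕ∞) * m := by rw [hsub]; push_cast; ring
    _ ≤ ((r + s - 2 : ℕ) : ℕ∞) * (m + k) := mul_le_mul_right le_self_add _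

lemma one_le (h : IsLargeMult n r m) (hn : 0 < n) (hr : 0 < r) : 1 ≤ m := by
  have hpos : 0 < 2 * n * r := by positivity
  refine Order.one_le_iff_ne_zero.mpr fun hm => hpos.ne' ?_
  exact_mod_cast nonpos_iff_eq_zero.mp (h.trans (by rw [hm, mul_zero]))

end IsLargeMult

section BaseLocus

variable {M : Type*} {Sec : ℕ → Type*} (mult : ∀ r : ℕ, Sec r → M → ℕ∞)

def baseLocus (r : ℕ) (P : Sec r → Prop) : Set M :=
  {y | ∀ η, P η → 1 ≤ mult r η y}

variable {mult}

lemma baseLocus_true (r : ℕ) :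
    baseLocus mult r (fun _ => True) = {y | ∀ η : Sec r, 1 ≤ mult r η y} := by
  simp [baseLocus]

lemma baseLocus_tmul_subset (tmul : ∀ {r₁ r₂ : ℕ}, Sec r₁ → Sec r₂ → Sec (r₁ + r₂))
    (hadd : ∀ (r₁ r₂ : ℕ) (η₁ : Sec r₁) (η₂ : Sec r₂) (x : M),
      mult (r₁ + r₂) (tmul η₁ η₂) x = mult r₁ η₁ x + mult r₂ η₂ x)
    {r₁ r₂ : ℕ} {P₁ : Sec r₁ → Prop} {P₂ : Sec r₂ → Prop} {P : Sec (r₁ + r₂) → Prop}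
    (hP : ∀ η₁ η₂, P₁ η₁ → P₂ η₂ → P (tmul η₁ η₂)) :
    baseLocus mult (r₁ + r₂) P ⊆ baseLocus mult r₁ P₁ ∪ baseLocus mult r₂ P₂ := by
  intro y hy
  by_contra hy'
  simp only [baseLocus, Set.mem_union, Set.mem_ofPred_eq, not_or, not_forall,
    Order.one_le_iff_ne_zero, not_not] at hy'
  obtain ⟨⟨η₁, hP₁, h₁⟩, ⟨η₂, hP₂, h₂⟩⟩ := hy'
  have := hy _ (hP η₁ η₂ hP₁ hP₂)
  rw [hadd, h₁, h₂, add_zero] at this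
  simp at this

lemma mem_baseLocus_isLargeMult {n r : ℕ} (hn : 0 < n) (hr : 0 < r) (x : M) :
    x ∈ baseLocus mult r (fun η => IsLargeMult n r (mult r η x)) :=
  fun _ h => h.one_le hn hr

end BaseLocus

/-- `Sec r` models `H⁰(M, rK_M)`, `mult r η x` the vanishing order (`⊤` for the zero section),
`tmul` the tensor product and `gen` the filter of Zariski-generic subsets of `M`. -/
theorem SM_semigroup {M : Type*} (n : ℕ) (hn : 1 ≤ n)
    (Sec : ℕ → Type*) (mult : ∀ r : ℕ, Sec r → M → ℕ∞)
    (tmul : ∀ {r₁ r₂ : ℕ}, Sec r₁ → Sec r₂ → Sec (r₁ + r₂))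
    (hadd : ∀ (r₁ r₂ : ℕ) (η₁ : Sec r₁) (η₂ : Sec r₂) (x : M),
      mult (r₁ + r₂) (tmul η₁ η₂) x = mult r₁ η₁ x + mult r₂ η₂ x)
    (gen : Filter M) (SM : Set ℕ)
    (hSM : SM = {r : ℕ | 3 ≤ r ∧
      {y : M | ∀ η : Sec r, 1 ≤ mult r η y} = ∅ ∧
      ∀ᶠ x in gen,
        {y : M | ∀ η : Sec r,
          ((2 * n * r : ℕ) : ℕ∞) ≤ ((r - 2 : ℕ) : ℕ∞) * mult r η x →
            1 ≤ mult r η y} = {x}})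
    (r₁ r₂ : ℕ) (h₁ : r₁ ∈ SM) (h₂ : r₂ ∈ SM) : r₁ + r₂ ∈ SM := by
  subst hSM
  obtain ⟨h3₁, hB₁, hG₁⟩ := h₁
  obtain ⟨h3₂, hB₂, hG₂⟩ := h₂
  have hP : ∀ x η₁ η₂, IsLargeMult n r₁ (mult r₁ η₁ x) → IsLargeMult n r₂ (mult r₂ η₂ x) →
      IsLargeMult n (r₁ + r₂) (mult (r₁ + r₂) (tmul η₁ η₂) x) :=
    fun x η₁ η₂ h _ => hadd r₁ r₂ η₁ η₂ x ▸ h.add h3₁ r₂ _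
  refine ⟨by omega, ?_, ?_⟩
  · rw [← baseLocus_true] at hB₁ hB₂ ⊢
    refine Set.subset_eq_empty (baseLocus_tmul_subset tmul hadd (P₁ := fun _ => True)
      (P₂ := fun _ => True) fun _ _ _ _ => trivial) ?_
    rw [hB₁, hB₂, Set.union_empty]
  · filter_upwards [hG₁, hG₂] with x hx₁ hx₂
    refine (baseLocus_tmul_subset tmul hadd (hP x)).trans ?_ |>.antisymm ?_
    · exact Set.union_subset hx₁.le hx₂.le
    · exact Set.singleton_subset_iff.mpr (mem_baseLocus_isLargeMult hn (by omega) x)
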